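/- arXiv:0707.4617 — 4 statements merged into one kernel-verified Lean document; each statement's English description precedes it below -/
import Mathlib

section
/- Let p be a prime and let Y(q) ∈ Z_p[[q]] be a formal power series written as Y(q) = Σ_{d≥1} n_d d^3 q^d/(1-q^d) with n_d ∈ Q_p. Then all n_d ∈ Z_p if and only if there exists ψ(q) ∈ Z_p[[q]] with Y(q) - Y(q^p) = δ^3(ψ(q)), where δ = q d/dq. -/
/-!
The `m`-th coefficient of `Y(q) - Y(q^p)` is `Σ n_d d³` over the divisors `d` of `m` with
`p ∤ m/d`, and every such `d` has `‖d‖ = ‖m‖`. So `Y(q) - Y(q^p) = δ³ψ` with `ψ` integral iff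
its `m`-th coefficient has norm at most `‖m‖³` for every `m`. The ultrametric inequality gives
this when all `n_d` are integral; conversely the system is unitriangular (the term `d = m`
occurs in the `m`-th coefficient), so the integrality of `n_m` follows by strong induction on `m`.
-/

open PowerSeries

/-- The derivation `δ = q d/dq` on formal power series: the `m`-th coefficient of `δ f`
is `m` times the `m`-th coefficient of `f`. -/
noncomputable def seriesDelta {R : Type*} [CommRing R] (f : PowerSeries R) : PowerSeries R :=
  PowerSeries.mk fun m => (m : R) * PowerSeries.coeff m f

/-- Substitution `q ↦ q^p` on formal power series: the `m`-th coefficient of `f(q^p)`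
is the `m/p`-th coefficient of `f` if `p ∣ m`, and `0` otherwise. -/
noncomputable def seriesSub {R : Type*} [CommRing R] (p : ℕ) (f : PowerSeries R) : PowerSeries R :=
  PowerSeries.mk fun m => if p ∣ m then PowerSeries.coeff (m / p) f else 0

namespace PowerSeries

variable {R : Type*} [CommRing R]

@[simp]
lemma coeff_seriesDelta (f : R⟦X⟧) (m : ℕ) : coeff m (seriesDelta f) = m * coeff m f :=
  coeff_mk _ _

lemma coeff_iterate_seriesDelta (k : ℕ) (f : R⟦X⟧) (m : ℕ) :
    coeff m (seriesDelta^[k] f) = (m : R) ^ k * coeff m f := by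
  induction k generalizing f with
  | zero => simp
  | succ k ih => rw [Function.iterate_succ_apply, ih, coeff_seriesDelta]; ring

lemma coeff_seriesSub (p : ℕ) (f : R⟦X⟧) (m : ℕ) :
    coeff m (seriesSub p f) = if p ∣ m then coeff (m / p) f else 0 :=
  coeff_mk _ _

lemma coeff_zero_sub_seriesSub (p : ℕ) (f : R⟦X⟧) : coeff 0 (f - seriesSub p f) = 0 := by
  rw [map_sub, coeff_seriesSub, if_pos (dvd_zero p), Nat.zero_div, sub_self]

end PowerSeries

namespace Nat

def cofactorCoprimeDivisors (m p : ℕ) : Finset ℕ :=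
  m.divisors.filter fun d => ¬ p * d ∣ m

variable {m p d : ℕ}

lemma mem_cofactorCoprimeDivisors :
    d ∈ m.cofactorCoprimeDivisors p ↔ (d ∣ m ∧ m ≠ 0) ∧ ¬ p * d ∣ m := by
  rw [cofactorCoprimeDivisors, Finset.mem_filter, mem_divisors]

lemma pos_of_mem_cofactorCoprimeDivisors (hd : d ∈ m.cofactorCoprimeDivisors p) : 0 < d := by
  obtain ⟨⟨hdm, hm⟩, -⟩ := mem_cofactorCoprimeDivisors.mp hd
  exact pos_of_dvd_of_pos hdm (pos_of_ne_zero hm)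

lemma self_mem_cofactorCoprimeDivisors (hp : 1 < p) (hd : d ≠ 0) :
    d ∈ d.cofactorCoprimeDivisors p := by
  refine mem_cofactorCoprimeDivisors.mpr ⟨⟨dvd_rfl, hd⟩, fun h => ?_⟩
  have := le_of_dvd (pos_of_ne_zero hd) h
  nlinarith [pos_of_ne_zero hd]

lemma divisors_div_eq_filter_mul_dvd (hpm : p ∣ m) (hm : m ≠ 0) :
    (m / p).divisors = m.divisors.filter fun d => p * d ∣ m := by
  have hp : p ≠ 0 := ne_zero_of_dvd_ne_zero hm hpm
  ext d
  simp only [mem_divisors, Finset.mem_filter, dvd_div_iff_mul_dvd hpm,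
    div_ne_zero_iff_of_dvd hpm]
  exact ⟨fun ⟨h, _⟩ => ⟨⟨(dvd_mul_left d p).trans h, hm⟩, h⟩, fun ⟨_, h⟩ => ⟨h, hm, hp⟩⟩

end Nat

open PowerSeries

lemma PowerSeries.coeff_sub_seriesSub_eq_sum {R : Type*} [CommRing R] (p : ℕ) (a : ℕ → R)
    (Y : R⟦X⟧) (hY : ∀ m, 1 ≤ m → coeff m Y = ∑ d ∈ m.divisors, a d) {m : ℕ} (hm : 1 ≤ m) :
    coeff m (Y - seriesSub p Y) = ∑ d ∈ m.cofactorCoprimeDivisors p, a d := by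
  rw [map_sub, coeff_seriesSub, hY m hm, Nat.cofactorCoprimeDivisors]
  split_ifs with hpm
  · have hmp : 1 ≤ m / p := Nat.one_le_iff_ne_zero.mpr <|
      (Nat.div_ne_zero_iff_of_dvd hpm).mpr ⟨by omega, ne_zero_of_dvd_ne_zero (by omega) hpm⟩
    rw [hY _ hmp, Nat.divisors_div_eq_filter_mul_dvd hpm (by omega), sub_eq_iff_eq_add',
      Finset.sum_filter_add_sum_filter_not]
  · rw [sub_zero, Finset.filter_true_of_mem]
    exact fun d _ h => hpm ((dvd_mul_right p d).trans h)

namespace Padic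

variable {p : ℕ} [Fact p.Prime]

lemma norm_natCast_eq_of_mem_cofactorCoprimeDivisors {m d : ℕ}
    (hd : d ∈ m.cofactorCoprimeDivisors p) : ‖(d : ℚ_[p])‖ = ‖(m : ℚ_[p])‖ := by
  obtain ⟨⟨⟨c, rfl⟩, -⟩, hpc⟩ := Nat.mem_cofactorCoprimeDivisors.mp hd
  have hc : ‖(c : ℚ_[p])‖ = 1 := by
    rw [norm_natCast_eq_one_iff, Nat.Prime.coprime_iff_not_dvd Fact.out]
    rintro ⟨e, rfl⟩
    exact hpc ⟨e, by ring⟩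
  rw [Nat.cast_mul, norm_mul, hc, mul_one]

lemma norm_natCast_pow_pos (k : ℕ) {m : ℕ} (hm : 0 < m) : 0 < ‖(m : ℚ_[p])‖ ^ k :=
  pow_pos (norm_pos_iff.mpr (Nat.cast_ne_zero.mpr hm.ne')) k

lemma norm_sum_le_of_subset_cofactorCoprimeDivisors (k : ℕ) (n : ℕ → ℚ_[p]) {m : ℕ}
    {s : Finset ℕ} (hs : s ⊆ m.cofactorCoprimeDivisors p) (hn : ∀ d ∈ s, ‖n d‖ ≤ 1) :
    ‖∑ d ∈ s, n d * (d : ℚ_[p]) ^ k‖ ≤ ‖(m : ℚ_[p])‖ ^ k := by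
  refine IsUltrametricDist.norm_sum_le_of_forall_le_of_nonneg (by positivity) fun d hd => ?_
  rw [norm_mul, norm_pow, norm_natCast_eq_of_mem_cofactorCoprimeDivisors (hs hd)]
  exact mul_le_of_le_one_left (by positivity) (hn d hd)

lemma forall_norm_le_one_iff_norm_sum_cofactorCoprimeDivisors_le (k : ℕ) (n : ℕ → ℚ_[p]) :
    (∀ d : ℕ, 1 ≤ d → ‖n d‖ ≤ 1) ↔
      ∀ m : ℕ, 1 ≤ m → ‖∑ d ∈ m.cofactorCoprimeDivisors p, n d * (d : ℚ_[p]) ^ k‖ ≤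
        ‖(m : ℚ_[p])‖ ^ k := by
  refine ⟨fun hn m _ => norm_sum_le_of_subset_cofactorCoprimeDivisors k n subset_rfl
    fun d hd => hn d (Nat.pos_of_mem_cofactorCoprimeDivisors hd), fun hS d => ?_⟩
  induction d using Nat.strong_induction_on with
  | _ d ih =>
    intro hd
    set S := d.cofactorCoprimeDivisors p
    have hdS : d ∈ S := Nat.self_mem_cofactorCoprimeDivisors (Fact.out : p.Prime).one_lt
      (by omega)
    have hrest : ‖∑ e ∈ S.erase d, n e * (e : ℚ_[p]) ^ k‖ ≤ ‖(d : ℚ_[p])‖ ^ k := by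
      refine norm_sum_le_of_subset_cofactorCoprimeDivisors k n (Finset.erase_subset _ _)
        fun e he => ?_
      obtain ⟨hne, heS⟩ := Finset.mem_erase.mp he
      have hed : e ≤ d := Nat.le_of_dvd (by omega) (Nat.mem_cofactorCoprimeDivisors.mp heS).1.1
      exact ih e (lt_of_le_of_ne hed hne) (Nat.pos_of_mem_cofactorCoprimeDivisors heS)
    have hterm : n d * (d : ℚ_[p]) ^ k =
        ∑ e ∈ S, n e * (e : ℚ_[p]) ^ k - ∑ e ∈ S.erase d, n e * (e : ℚ_[p]) ^ k := by
      rw [← Finset.add_sum_erase _ _ hdS, add_sub_cancel_right]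
    have hbound : ‖n d * (d : ℚ_[p]) ^ k‖ ≤ ‖(d : ℚ_[p])‖ ^ k := by
      rw [hterm, sub_eq_add_neg]
      exact (nonarchimedean _ _).trans (max_le (hS d hd) (by rwa [norm_neg]))
    rw [norm_mul, norm_pow] at hbound
    exact le_of_mul_le_mul_right (by rwa [one_mul]) (norm_natCast_pow_pos k hd)

lemma exists_iterate_seriesDelta_iff (k : ℕ) (Z : ℚ_[p]⟦X⟧) (hZ : coeff 0 Z = 0) :
    (∃ ψ : ℚ_[p]⟦X⟧, (∀ m, ‖coeff m ψ‖ ≤ 1) ∧ Z = seriesDelta^[k] ψ) ↔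
      ∀ m : ℕ, 1 ≤ m → ‖coeff m Z‖ ≤ ‖(m : ℚ_[p])‖ ^ k := by
  constructor
  · rintro ⟨ψ, hψ, rfl⟩ m _
    rw [coeff_iterate_seriesDelta, norm_mul, norm_pow]
    exact mul_le_of_le_one_right (by positivity) (hψ m)
  · intro hZm
    refine ⟨PowerSeries.mk fun m => ((m : ℚ_[p]) ^ k)⁻¹ * coeff m Z, fun m => ?_, ?_⟩
    · rcases Nat.eq_zero_or_pos m with rfl | hm
      · simp [hZ]
      · rw [coeff_mk, norm_mul, norm_inv, norm_pow, inv_mul_le_iff₀ (norm_natCast_pow_pos k hm),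
          mul_one]
        exact hZm m hm
    · ext m
      rw [coeff_iterate_seriesDelta, coeff_mk]
      rcases Nat.eq_zero_or_pos m with rfl | hm
      · simp [hZ]
      · have : (m : ℚ_[p]) ≠ 0 := Nat.cast_ne_zero.mpr hm.ne'
        field_simp

end Padic

theorem stmt0_general (p : ℕ) [Fact p.Prime] (n : ℕ → ℚ_[p]) (Y : PowerSeries ℚ_[p])
    (hY : ∀ m : ℕ, 1 ≤ m →
      PowerSeries.coeff m Y = ∑ d ∈ m.divisors, n d * (d : ℚ_[p]) ^ 3) :
    (∀ d : ℕ, 1 ≤ d → ‖n d‖ ≤ 1) ↔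
      ∃ ψ : PowerSeries ℚ_[p], (∀ m : ℕ, ‖PowerSeries.coeff m ψ‖ ≤ 1) ∧
        Y - seriesSub p Y = seriesDelta (seriesDelta (seriesDelta ψ)) := by
  refine (Padic.forall_norm_le_one_iff_norm_sum_cofactorCoprimeDivisors_le 3 n).trans
    (Iff.trans ?_ (Padic.exists_iterate_seriesDelta_iff 3 _ (coeff_zero_sub_seriesSub p Y)).symm)
  exact forall₂_congr fun m hm => by rw [coeff_sub_seriesSub_eq_sum p _ Y hY hm]

/-- Lemma KSV: for `Y(q) ∈ ℤ_p[[q]]` written as `Y(q) = Σ_{d≥1} n_d d³ q^d/(1-q^d)` with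
`n_d ∈ ℚ_p`, all `n_d` lie in `ℤ_p` iff `Y(q) - Y(q^p) = δ³(ψ)` for some `ψ ∈ ℤ_p[[q]]`. -/
theorem stmt0 (p : ℕ) [Fact p.Prime] (n : ℕ → ℚ_[p]) (Y : PowerSeries ℚ_[p])
    (hint : ∀ m : ℕ, ‖PowerSeries.coeff m Y‖ ≤ 1)
    (hY0 : PowerSeries.constantCoeff Y = 0)
    (hY : ∀ m : ℕ, 1 ≤ m →
      PowerSeries.coeff m Y = ∑ d ∈ m.divisors, n d * (d : ℚ_[p]) ^ 3) :
    (∀ d : ℕ, 1 ≤ d → ‖n d‖ ≤ 1) ↔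
      ∃ ψ : PowerSeries ℚ_[p], (∀ m : ℕ, ‖PowerSeries.coeff m ψ‖ ≤ 1) ∧
        Y - seriesSub p Y = seriesDelta (seriesDelta (seriesDelta ψ)) :=
  stmt0_general p n Y hY
end

section
/- (Key step of Lemma KSV) Let p be a prime and n_d ∈ Q_p for d ≥ 1. Suppose for every m ≥ 1: v_p( Σ_{d|m} n_d d^3 − Σ_{d | (m/p)} n_d d^3 ) ≥ 3 v_p(m), where the second sum is empty if p ∤ m. Then n_d ∈ Z_p for all d. -/
/-- Key step of Lemma KSV.  Let `n_d ∈ ℚ_p` for `d ≥ 1` and suppose that for every `m ≥ 1`,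
`v_p( Σ_{d∣m} n_d d³ − Σ_{d∣(m/p)} n_d d³ ) ≥ 3 v_p(m)` (the second sum being absent when
`p ∤ m`); in norms: `‖·‖ ≤ ‖m‖³`.  Then `n_d ∈ ℤ_p` for all `d ≥ 1`. -/
theorem stmt11 (p : ℕ) [Fact p.Prime] (n : ℕ → ℚ_[p])
    (h : ∀ m : ℕ, 1 ≤ m →
      ‖(∑ d ∈ m.divisors, n d * (d : ℚ_[p]) ^ 3) -
        (if p ∣ m then ∑ d ∈ (m / p).divisors, n d * (d : ℚ_[p]) ^ 3 else 0)‖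
        ≤ ‖(m : ℚ_[p])‖ ^ 3) :
    ∀ d : ℕ, 1 ≤ d → ‖n d‖ ≤ 1 := by
  have hp := (Fact.out : p.Prime)
  intro d
  induction d using Nat.strong_induction_on with
  | _ m IH =>
  intro hm
  have hm0 : m ≠ 0 := by omega
  -- the set of divisors of m not dividing m/p (all divisors if p ∤ m)
  set S : Finset ℕ := if p ∣ m then m.divisors \ (m / p).divisors else m.divisors with hS
  have hsum : ‖∑ d ∈ S, n d * (d : ℚ_[p]) ^ 3‖ ≤ ‖(m : ℚ_[p])‖ ^ 3 := by
    have H := h m hm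
    by_cases hpm : p ∣ m
    · rw [hS, if_pos hpm, Finset.sum_sdiff_eq_sub
        (Nat.divisors_subset_of_dvd hm0 (Nat.div_dvd_of_dvd hpm))]
      rwa [if_pos hpm] at H
    · rw [hS, if_neg hpm]
      rw [if_neg hpm, sub_zero] at H
      exact H
  have hmemS : m ∈ S := by
    have hmm : m ∈ m.divisors := Nat.mem_divisors_self m hm0
    rw [hS]
    split_ifs with hpm
    · refine Finset.mem_sdiff.mpr ⟨hmm, fun hc => ?_⟩
      have := Nat.divisor_le hc
      have hp2 : 2 ≤ p := hp.two_le
      have := Nat.div_lt_self (by omega : 0 < m) (by omega : 1 < p)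
      omega
    · exact hmm
  have key : n m * (m : ℚ_[p]) ^ 3 =
      (∑ d ∈ S, n d * (d : ℚ_[p]) ^ 3) - ∑ d ∈ S.erase m, n d * (d : ℚ_[p]) ^ 3 := by
    rw [eq_sub_iff_add_eq]
    exact Finset.add_sum_erase S (fun d => n d * (d : ℚ_[p]) ^ 3) hmemS
  -- norm of every d ∈ S equals bound
  have hdS : ∀ d ∈ S, ‖(d : ℚ_[p])‖ ≤ ‖(m : ℚ_[p])‖ := by
    intro d hd
    have hdvd : d ∣ m := by
      rw [hS] at hd
      split_ifs at hd with hpm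
      · exact (Nat.mem_divisors.mp (Finset.mem_sdiff.mp hd).1).1
      · exact (Nat.mem_divisors.mp hd).1
    have hd0 : d ≠ 0 := by
      rintro rfl
      exact hm0 (Nat.eq_zero_of_zero_dvd hdvd)
    -- v_p m ≤ v_p d
    have hval : padicValNat p m ≤ padicValNat p d := by
      rw [hS] at hd
      split_ifs at hd with hpm
      · by_contra hlt
        push_neg at hlt
        -- then d ∣ m / p, contradiction
        have hndvd : ¬ d ∣ m / p := fun hc =>
          (Finset.mem_sdiff.mp hd).2 (Nat.mem_divisors.mpr ⟨hc, by
            intro hz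
            have := Nat.div_dvd_of_dvd hpm
            have : m / p ≠ 0 := Nat.div_ne_zero_iff_of_dvd hpm |>.mpr ⟨hm0, hp.ne_zero⟩
            exact this hz⟩)
        apply hndvd
        obtain ⟨t, ht⟩ := hdvd
        have ht0 : t ≠ 0 := by rintro rfl; simp at ht; exact hm0 ht
        have hvt : 1 ≤ padicValNat p t := by
          have := padicValNat.mul (p := p) hd0 ht0
          rw [← ht] at this
          omega
        obtain ⟨s, hs⟩ := dvd_of_one_le_padicValNat hvt
        refine ⟨s, ?_⟩
        rw [ht, hs]
        rw [Nat.mul_comm p s, ← Nat.mul_assoc, Nat.mul_div_cancel _ hp.pos]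
      · have : padicValNat p m = 0 := padicValNat.eq_zero_of_not_dvd hpm
        omega
    -- convert to norms
    have hnd : ‖(d : ℚ_[p])‖ = (p : ℝ) ^ (-(padicValNat p d : ℤ)) := by
      rw [Padic.norm_eq_zpow_neg_valuation (by exact_mod_cast hd0), Padic.valuation_natCast]
    have hnm : ‖(m : ℚ_[p])‖ = (p : ℝ) ^ (-(padicValNat p m : ℤ)) := by
      rw [Padic.norm_eq_zpow_neg_valuation (by exact_mod_cast hm0), Padic.valuation_natCast]
    rw [hnd, hnm]
    apply zpow_le_zpow_right₀ (by exact_mod_cast hp.one_le)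
    omega
  have hbound : ∀ d ∈ S.erase m, ‖n d * (d : ℚ_[p]) ^ 3‖ ≤ ‖(m : ℚ_[p])‖ ^ 3 := by
    intro d hd
    have hdS' := Finset.mem_of_mem_erase hd
    have hne := Finset.ne_of_mem_erase hd
    have hdvd : d ∣ m := by
      rw [hS] at hdS'
      split_ifs at hdS' with hpm
      · exact (Nat.mem_divisors.mp (Finset.mem_sdiff.mp hdS').1).1
      · exact (Nat.mem_divisors.mp hdS').1
    have hd1 : 1 ≤ d := Nat.pos_of_mem_divisors (by
      rw [hS] at hdS'
      split_ifs at hdS' with hpm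
      · exact (Finset.mem_sdiff.mp hdS').1
      · exact hdS')
    have hdlt : d < m := lt_of_le_of_ne (Nat.le_of_dvd (by omega) hdvd) hne
    have h1 := IH d hdlt hd1
    have h2 := hdS d hdS'
    rw [norm_mul, norm_pow]
    calc ‖n d‖ * ‖(d : ℚ_[p])‖ ^ 3 ≤ 1 * ‖(m : ℚ_[p])‖ ^ 3 := by
          apply mul_le_mul h1 (pow_le_pow_left₀ (norm_nonneg _) h2 3) (by positivity) zero_le_one
      _ = ‖(m : ℚ_[p])‖ ^ 3 := one_mul _
  have hsub : ‖∑ d ∈ S.erase m, n d * (d : ℚ_[p]) ^ 3‖ ≤ ‖(m : ℚ_[p])‖ ^ 3 :=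
    IsUltrametricDist.norm_sum_le_of_forall_le_of_nonneg (by positivity) hbound
  have hfin : ‖n m * (m : ℚ_[p]) ^ 3‖ ≤ ‖(m : ℚ_[p])‖ ^ 3 := by
    rw [key, sub_eq_add_neg]
    refine (Padic.nonarchimedean _ _).trans (max_le hsum ?_)
    rwa [norm_neg]
  have hmne : ‖(m : ℚ_[p])‖ ≠ 0 := by
    simp [hm0]
  rw [norm_mul, norm_pow] at hfin
  have : 0 < ‖(m : ℚ_[p])‖ ^ 3 := by positivity
  calc ‖n m‖ = ‖n m‖ * ‖(m : ℚ_[p])‖ ^ 3 / ‖(m : ℚ_[p])‖ ^ 3 := by field_simp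
    _ ≤ ‖(m : ℚ_[p])‖ ^ 3 / ‖(m : ℚ_[p])‖ ^ 3 := by gcongr
    _ = 1 := div_self this.ne'
end

section
/- Let V be a finite-dimensional Q-vector space with a nilpotent endomorphism N satisfying N^{n+1} = 0 and N^n ≠ 0, and let W_• be the monodromy filtration of N centered at n. If dim W_0 = dim W_1 = 1 (equivalently the associated graded in degrees 0 and 2n is one-dimensional), then dim Im N^n = 1 and dim Im N^{n-1} = 2. -/
/-- Morrison's Lemma 1.  Let `N` be nilpotent on a finite-dimensional `ℚ`-vector space `V`
with `N^{n+1} = 0`, `N^n ≠ 0`, and let `W_•` be the monodromy filtration of `N` centered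
at `n` (characterized by: increasing, `N W_i ⊆ W_{i-2}`, and `N^i` inducing isomorphisms
`Gr^W_{n+i} ≅ Gr^W_{n-i}`).  If `dim W_0 = dim W_1 = 1`, then `dim Im N^n = 1` and
`dim Im N^{n-1} = 2`. -/
theorem stmt13 (n : ℕ) (hn : 1 ≤ n) (V : Type*) [AddCommGroup V] [Module ℚ V]
    [FiniteDimensional ℚ V] (N : V →ₗ[ℚ] V)
    (hNn1 : N ^ (n + 1) = 0) (hNn : N ^ n ≠ 0)
    (W : ℤ → Submodule ℚ V) (hmono : Monotone W)
    (hbot : ∀ i : ℤ, i < 0 → W i = ⊥) (htop : ∀ i : ℤ, 2 * (n : ℤ) ≤ i → W i = ⊤)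
    (hNW : ∀ (i : ℤ), ∀ x ∈ W i, N x ∈ W (i - 2))
    (hgrInj : ∀ i : ℕ, ∀ x ∈ W ((n : ℤ) + i),
      (N ^ i) x ∈ W ((n : ℤ) - i - 1) → x ∈ W ((n : ℤ) + i - 1))
    (hgrSurj : ∀ i : ℕ, ∀ y ∈ W ((n : ℤ) - i),
      ∃ x ∈ W ((n : ℤ) + i), (N ^ i) x - y ∈ W ((n : ℤ) - i - 1))
    (hW0 : Module.finrank ℚ (W 0) = 1) (hW1 : Module.finrank ℚ (W 1) = 1) :
    Module.finrank ℚ (LinearMap.range (N ^ n)) = 1 ∧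
      Module.finrank ℚ (LinearMap.range (N ^ (n - 1))) = 2 := by
  obtain ⟨m, rfl⟩ : ∃ m, n = m + 1 := ⟨n - 1, (Nat.succ_pred_eq_of_pos hn).symm⟩
  clear hn hgrSurj hbot
  rw [show m + 1 - 1 = m from rfl]
  have hWc : ∀ i j : ℤ, i = j → ∀ x : V, x ∈ W i → x ∈ W j := by
    rintro i j rfl x hx; exact hx
  obtain ⟨v, hv⟩ : ∃ v, (N ^ (m + 1)) v ≠ 0 := by
    by_contra h; push_neg at h; exact hNn (LinearMap.ext fun x => h x)
  -- iterated action of N on the filtration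
  have hNk : ∀ (k : ℕ) (i : ℤ), ∀ x ∈ W i, (N ^ k) x ∈ W (i - 2 * k) := by
    intro k
    induction k with
    | zero => intro i x hx; simpa using hx
    | succ k ih =>
      intro i x hx
      have h1 := hNW (i - 2 * k) _ (ih i x hx)
      have h2 : (N ^ (k + 1)) x = N ((N ^ k) x) := by
        rw [pow_succ']; rfl
      rw [h2]
      exact hWc _ _ (by push_cast; ring) _ h1
  have hmemtop : ∀ x : V, x ∈ W (2 * ((m : ℕ) + 1 : ℕ)) := by
    intro x
    rw [htop _ (by push_cast; omega)]; trivial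
  -- the image of N^(m+1) lies in W 0
  have hrange0 : ∀ x : V, (N ^ (m + 1)) x ∈ W 0 := by
    intro x
    exact hWc _ _ (by push_cast; ring) _ (hNk (m + 1) _ x (hmemtop x))
  -- W 1 = W 0
  have hW10 : W 1 = W 0 :=
    (Submodule.eq_of_le_of_finrank_eq (hmono (by norm_num)) (hW0.trans hW1.symm)).symm
  -- W 0 is spanned by N^(m+1) v
  have hspan : Submodule.span ℚ {(N ^ (m + 1)) v} = W 0 := by
    apply Submodule.eq_of_le_of_finrank_eq
    · rw [Submodule.span_le, Set.singleton_subset_iff]; exact hrange0 v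
    · rw [finrank_span_singleton hv, hW0]
  -- kernel of N^(m+1) lies in W (2m)
  have hker : ∀ x : V, (N ^ (m + 1)) x = 0 → x ∈ W (2 * (m : ℤ)) := by
    intro x hx
    have h1 : x ∈ W ((((m : ℕ) + 1 : ℕ) : ℤ) + (((m : ℕ) + 1 : ℕ) : ℤ) - 1) := by
      apply hgrInj (m + 1) x
      · exact hWc _ _ (by push_cast; ring) _ (hmemtop x)
      · rw [hx]; exact Submodule.zero_mem _
    have h2 : x ∈ W ((((m : ℕ) + 1 : ℕ) : ℤ) + ((m : ℕ) : ℤ) - 1) := by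
      apply hgrInj m x
      · exact hWc _ _ (by push_cast; ring) _ h1
      · have h3 : (N ^ m) x ∈ W 1 := hWc _ _ (by push_cast; ring) _ (hNk m _ x h1)
        rw [hW10] at h3
        exact hWc _ _ (by push_cast; ring) _ h3
    exact hWc _ _ (by push_cast; ring) _ h2
  -- range of N^(m+1) equals span of N^(m+1) v
  have hrangeEq : LinearMap.range (N ^ (m + 1)) = Submodule.span ℚ {(N ^ (m + 1)) v} := by
    apply le_antisymm
    · rintro _ ⟨x, rfl⟩
      rw [hspan]; exact hrange0 x
    · rw [Submodule.span_le, Set.singleton_subset_iff]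
      exact ⟨v, rfl⟩
  constructor
  · rw [hrangeEq, finrank_span_singleton hv]
  -- now the rank 2 part
  · have hNm1v : (N ^ (m + 1)) v = (N ^ m) (N v) := by
      rw [pow_succ]; rfl
    have hrangeEq2 : LinearMap.range (N ^ m)
        = Submodule.span ℚ {(N ^ m) v, (N ^ (m + 1)) v} := by
      apply le_antisymm
      · rintro _ ⟨x, rfl⟩
        obtain ⟨c, hc⟩ := Submodule.mem_span_singleton.mp (hspan ▸ hrange0 x)
        have hker' : (N ^ (m + 1)) (x - c • v) = 0 := by
          rw [map_sub, map_smul, ← hc, sub_self]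
        have h2m := hker _ hker'
        have h0 : (N ^ m) (x - c • v) ∈ W 0 :=
          hWc _ _ (by push_cast; ring) _ (hNk m _ _ h2m)
        obtain ⟨d, hd⟩ := Submodule.mem_span_singleton.mp (hspan ▸ h0)
        rw [Submodule.mem_span_pair]
        refine ⟨c, d, ?_⟩
        rw [map_sub, map_smul] at hd
        linear_combination (norm := module) hd
      · rw [Submodule.span_le]
        rintro _ (rfl | rfl)
        · exact ⟨v, rfl⟩
        · exact ⟨N v, hNm1v.symm⟩
    rw [hrangeEq2]
    have hli : LinearIndependent ℚ ![(N ^ m) v, (N ^ (m + 1)) v] := by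
      rw [LinearIndependent.pair_iff]
      intro s t hst
      have h1 : N (s • (N ^ m) v + t • (N ^ (m + 1)) v) = 0 := by rw [hst, map_zero]
      rw [map_add, map_smul, map_smul] at h1
      have hz : N ((N ^ (m + 1)) v) = 0 := by
        have h : N ∘ₗ N ^ (m + 1) = 0 := by
          rw [← Module.End.mul_eq_comp, ← pow_succ']
          exact hNn1
        exact congrFun (congrArg DFunLike.coe h) v
      have hz2 : N ((N ^ m) v) = (N ^ (m + 1)) v := by
        rw [pow_succ']; rfl
      rw [hz, hz2, smul_zero, add_zero] at h1
      have hs : s = 0 := (smul_eq_zero.mp h1).resolve_right hv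
      subst hs
      simp only [zero_smul, zero_add] at hst
      exact ⟨rfl, (smul_eq_zero.mp hst).resolve_right hv⟩
    have hcard := finrank_span_eq_card hli
    rw [show ({(N ^ m) v, (N ^ (m + 1)) v} : Set V)
      = Set.range ![(N ^ m) v, (N ^ (m + 1)) v] by
        simp [Matrix.range_cons, Matrix.range_empty, Set.pair_comm]]
    simpa using hcard
end

section
/- Suppose V is a 4-dimensional Q_p-vector space (or rank-4 free Z_p-module E with V = E ⊗ Q_p) with nilpotent N, N^3 ≠ 0, and φ an automorphism of V with Nφ = pφN and ⟨φv, φu⟩ = p^3⟨v,u⟩ for a perfect symplectic pairing ⟨·,·⟩ with ⟨Nv, u⟩ + ⟨v, Nu⟩ = 0. Then the monodromy filtration has all graded pieces of dimension 1, and φ acts on Gr^W_{2i} by ε·p^i for a single sign ε = ±1 independent of i ∈ {0,1,2,3}. -/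
/-- Lemma ht (abstract form).  Let `V` be a `4`-dimensional `ℚ_p`-vector space with a nilpotent
`N` satisfying `N³ ≠ 0`, and `F` a bijective endomorphism with `N F = p F N` and
`⟨F v, F u⟩ = p³ ⟨v, u⟩` for a perfect symplectic pairing `⟨·,·⟩` with
`⟨N v, u⟩ + ⟨v, N u⟩ = 0`.  Let `W_•` be the monodromy filtration of `N` centered at `3`.
Then all graded pieces of `W_•` are one-dimensional (`dim W_{2i} = i + 1`, `W_{2i+1} = W_{2i}`),
and `F` acts on `Gr^W_{2i}` by `ε pⁱ` for a single sign `ε = ±1` independent of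
`i ∈ {0,1,2,3}`. -/
theorem stmt15 (p : ℕ) [Fact p.Prime] (V : Type*) [AddCommGroup V] [Module ℚ_[p] V]
    [FiniteDimensional ℚ_[p] V] (hdim : Module.finrank ℚ_[p] V = 4)
    (N F : V →ₗ[ℚ_[p]] V) (hnil : IsNilpotent N) (hN3 : N ^ 3 ≠ 0)
    (hFbij : Function.Bijective F)
    (hcomm : N ∘ₗ F = (p : ℚ_[p]) • (F ∘ₗ N))
    (B : V →ₗ[ℚ_[p]] V →ₗ[ℚ_[p]] ℚ_[p])
    (halt : ∀ v u : V, B v u = -B u v)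
    (hnondeg : ∀ v : V, (∀ u : V, B v u = 0) → v = 0)
    (hNB : ∀ v u : V, B (N v) u + B v (N u) = 0)
    (hFB : ∀ v u : V, B (F v) (F u) = (p : ℚ_[p]) ^ 3 * B v u)
    (W : ℤ → Submodule ℚ_[p] V) (hmono : Monotone W)
    (hbot : ∀ i : ℤ, i < 0 → W i = ⊥) (htop : ∀ i : ℤ, 6 ≤ i → W i = ⊤)
    (hNW : ∀ (i : ℤ), ∀ x ∈ W i, N x ∈ W (i - 2))
    (hgrInj : ∀ i : ℕ, ∀ x ∈ W ((3 : ℤ) + i),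
      (N ^ i) x ∈ W ((3 : ℤ) - i - 1) → x ∈ W ((3 : ℤ) + i - 1))
    (hgrSurj : ∀ i : ℕ, ∀ y ∈ W ((3 : ℤ) - i),
      ∃ x ∈ W ((3 : ℤ) + i), (N ^ i) x - y ∈ W ((3 : ℤ) - i - 1)) :
    (∀ i : ℕ, i ≤ 3 →
      Module.finrank ℚ_[p] (W (2 * (i : ℤ))) = i + 1 ∧ W (2 * (i : ℤ) + 1) = W (2 * (i : ℤ))) ∧
    ∃ eps : ℚ_[p], (eps = 1 ∨ eps = -1) ∧
      ∀ i : ℕ, i ≤ 3 → ∀ v ∈ W (2 * (i : ℤ)),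
        F v - (eps * (p : ℚ_[p]) ^ i) • v ∈ W (2 * (i : ℤ) - 1) := by
  classical
  have hpQ : (p : ℚ_[p]) ≠ 0 := Nat.cast_ne_zero.mpr (Fact.out (p := p.Prime)).ne_zero
  -- N ^ 4 = 0
  have hN4 : N ^ 4 = 0 := by
    have h := LinearMap.aeval_self_charpoly N
    rw [hnil.charpoly_eq_X_pow_finrank, hdim] at h
    simpa using h
  obtain ⟨e, he⟩ : ∃ e : V, (N ^ 3) e ≠ 0 := by
    by_contra h
    push_neg at h
    exact hN3 (LinearMap.ext fun x => by simpa using h x)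
  have hstepv : ∀ (l : ℕ) (v : V), N ((N ^ l) v) = (N ^ (l + 1)) v := by
    intro l v
    rw [pow_succ', Module.End.mul_apply]
  have hple : ∀ (k l : ℕ) (v : V), (N ^ k) ((N ^ l) v) = (N ^ (k + l)) v := by
    intro k l v
    rw [← Module.End.mul_apply, ← pow_add]
  have hkl : ∀ k l : ℕ, 4 ≤ k + l → (N ^ k) ((N ^ l) e) = 0 := by
    intro k l h
    obtain ⟨m, hm⟩ := Nat.exists_eq_add_of_le h
    rw [hple, hm, pow_add, Module.End.mul_apply, hN4, LinearMap.zero_apply]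
  have hN3e0 : N ((N ^ 3) e) = 0 := by
    have := hkl 1 3 (by norm_num)
    rwa [pow_one] at this
  have hN2e : N ((N ^ 2) e) = (N ^ 3) e := hstepv 2 e
  have hN1e : N ((N ^ 1) e) = (N ^ 2) e := hstepv 1 e
  -- linear independence
  have li2 : LinearIndependent ℚ_[p] ![(N ^ 2) e, (N ^ 3) e] := by
    rw [Fintype.linearIndependent_iff]
    intro g hg
    rw [Fin.sum_univ_two] at hg
    simp only [Matrix.cons_val_zero, Matrix.cons_val_one, Matrix.head_cons] at hg
    have h1 : g 0 • (N ^ 3) e = 0 := by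
      have := congrArg N hg
      simpa [map_add, map_smul, hN2e, hN3e0] using this
    have hg0 : g 0 = 0 := by
      rcases smul_eq_zero.mp h1 with h | h
      · exact h
      · exact absurd h he
    have hg1 : g 1 = 0 := by
      rw [hg0, zero_smul, zero_add] at hg
      rcases smul_eq_zero.mp hg with h | h
      · exact h
      · exact absurd h he
    intro i; fin_cases i
    · exact hg0
    · exact hg1
  have li3 : LinearIndependent ℚ_[p] ![(N ^ 1) e, (N ^ 2) e, (N ^ 3) e] := by
    rw [Fintype.linearIndependent_iff]
    intro g hg
    rw [Fin.sum_univ_three] at hg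
    simp only [Matrix.cons_val_zero, Matrix.cons_val_one, Matrix.head_cons,
      Matrix.cons_val_two, Matrix.tail_cons] at hg
    have h2Ne : (N ^ 2) (N e) = (N ^ 3) e := by simpa using hple 2 1 e
    have h4e : (N ^ 4) e = 0 := by simpa using hkl 4 0 (by norm_num)
    have h5e : (N ^ 5) e = 0 := by simpa using hkl 5 0 (by norm_num)
    have h1 : g 0 • (N ^ 3) e = 0 := by
      have := congrArg (⇑(N ^ 2)) hg
      simpa [map_add, map_smul, hple, h2Ne, h4e, h5e] using this
    have hg0 : g 0 = 0 := by
      rcases smul_eq_zero.mp h1 with h | h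
      · exact h
      · exact absurd h he
    rw [hg0, zero_smul, zero_add] at hg
    have h2 : g 1 • (N ^ 3) e = 0 := by
      have := congrArg N hg
      simpa [map_add, map_smul, hN2e, hN3e0] using this
    have hg1 : g 1 = 0 := by
      rcases smul_eq_zero.mp h2 with h | h
      · exact h
      · exact absurd h he
    have hg2 : g 2 = 0 := by
      rw [hg1, zero_smul, zero_add] at hg
      rcases smul_eq_zero.mp hg with h | h
      · exact h
      · exact absurd h he
    intro i; fin_cases i
    · exact hg0
    · exact hg1
    · exact hg2
  set S1 : Submodule ℚ_[p] V := Submodule.span ℚ_[p] {(N ^ 3) e} with hS1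
  set S2 : Submodule ℚ_[p] V := Submodule.span ℚ_[p] (Set.range ![(N ^ 2) e, (N ^ 3) e]) with hS2
  set S3 : Submodule ℚ_[p] V :=
    Submodule.span ℚ_[p] (Set.range ![(N ^ 1) e, (N ^ 2) e, (N ^ 3) e]) with hS3
  have fr1 : Module.finrank ℚ_[p] S1 = 1 := finrank_span_singleton he
  have fr2 : Module.finrank ℚ_[p] S2 = 2 := by
    rw [hS2, finrank_span_eq_card li2]; simp
  have fr3 : Module.finrank ℚ_[p] S3 = 3 := by
    rw [hS3, finrank_span_eq_card li3]; simp
  have hmemrange : ∀ k l : ℕ, (N ^ (k + l)) e ∈ LinearMap.range (N ^ k) :=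
    fun k l => ⟨(N ^ l) e, hple k l e⟩
  -- kernels
  have hrk : ∀ k : ℕ, Module.finrank ℚ_[p] (LinearMap.range (N ^ k))
      + Module.finrank ℚ_[p] (LinearMap.ker (N ^ k)) = 4 := by
    intro k
    rw [← hdim]; exact LinearMap.finrank_range_add_finrank_ker (N ^ k)
  have hS1le : S1 ≤ LinearMap.ker N := by
    rw [hS1, Submodule.span_singleton_le_iff_mem]
    exact LinearMap.mem_ker.mpr hN3e0
  have hS2le : S2 ≤ LinearMap.ker (N ^ 2) := by
    rw [hS2, Submodule.span_le]
    rintro x ⟨i, rfl⟩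
    fin_cases i <;> simp only [Matrix.cons_val_zero, Matrix.cons_val_one, Matrix.head_cons] <;>
      exact LinearMap.mem_ker.mpr (hkl 2 _ (by norm_num))
  have hS3le : S3 ≤ LinearMap.ker (N ^ 3) := by
    rw [hS3, Submodule.span_le]
    rintro x ⟨i, rfl⟩
    fin_cases i <;> simp only [Matrix.cons_val_zero, Matrix.cons_val_one, Matrix.head_cons,
      Matrix.cons_val_two, Matrix.tail_cons] <;>
      exact LinearMap.mem_ker.mpr (hkl 3 _ (by norm_num))
  have hS3r : S3 ≤ LinearMap.range (N ^ 1) := by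
    rw [hS3, Submodule.span_le]
    rintro x ⟨i, rfl⟩
    fin_cases i <;> simp only [Matrix.cons_val_zero, Matrix.cons_val_one, Matrix.head_cons,
      Matrix.cons_val_two, Matrix.tail_cons]
    · exact hmemrange 1 0
    · exact hmemrange 1 1
    · exact hmemrange 1 2
  have hS2r : S2 ≤ LinearMap.range (N ^ 2) := by
    rw [hS2, Submodule.span_le]
    rintro x ⟨i, rfl⟩
    fin_cases i <;> simp only [Matrix.cons_val_zero, Matrix.cons_val_one, Matrix.head_cons]
    · exact hmemrange 2 0
    · exact hmemrange 2 1
  have hS1r : S1 ≤ LinearMap.range (N ^ 3) := by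
    rw [hS1, Submodule.span_singleton_le_iff_mem]
    exact hmemrange 3 0
  have hker1 : LinearMap.ker N = S1 := by
    refine (Submodule.eq_of_le_of_finrank_le hS1le ?_).symm
    have h1 : 3 ≤ Module.finrank ℚ_[p] (LinearMap.range (N ^ 1)) := by
      have := Submodule.finrank_mono (M := V) hS3r
      rwa [fr3] at this
    have h2 := hrk 1
    rw [pow_one] at h1 h2
    omega
  have hker2 : LinearMap.ker (N ^ 2) = S2 := by
    refine (Submodule.eq_of_le_of_finrank_le hS2le ?_).symm
    have h1 : 2 ≤ Module.finrank ℚ_[p] (LinearMap.range (N ^ 2)) := by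
      have := Submodule.finrank_mono (M := V) hS2r
      rwa [fr2] at this
    have h2 := hrk 2
    omega
  have hker3 : LinearMap.ker (N ^ 3) = S3 := by
    refine (Submodule.eq_of_le_of_finrank_le hS3le ?_).symm
    have h1 : 1 ≤ Module.finrank ℚ_[p] (LinearMap.range (N ^ 3)) := by
      have := Submodule.finrank_mono (M := V) hS1r
      rwa [fr1] at this
    have h2 := hrk 3
    omega
  -- W computations
  have hW6 : W 6 = ⊤ := htop 6 le_rfl
  have he6 : e ∈ W 6 := by rw [hW6]; trivial
  have hx1W : (N ^ 1) e ∈ W 4 := by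
    have := hNW 6 e he6
    rw [show (6 : ℤ) - 2 = 4 by norm_num] at this
    rwa [pow_one]
  have hx2W : (N ^ 2) e ∈ W 2 := by
    have := hNW 4 _ hx1W
    rw [show (4 : ℤ) - 2 = 2 by norm_num, hN1e] at this
    exact this
  have hx3W : (N ^ 3) e ∈ W 0 := by
    have := hNW 2 _ hx2W
    rw [show (2 : ℤ) - 2 = 0 by norm_num, hN2e] at this
    exact this
  have hW0K : W 0 ≤ LinearMap.ker N := by
    intro x hx
    have h := hNW 0 x hx
    rw [show (0 : ℤ) - 2 = -2 by norm_num, hbot (-2) (by norm_num), Submodule.mem_bot] at h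
    exact LinearMap.mem_ker.mpr h
  have hW1K : W 1 ≤ LinearMap.ker N := by
    intro x hx
    have h := hNW 1 x hx
    rw [show (1 : ℤ) - 2 = -1 by norm_num, hbot (-1) (by norm_num), Submodule.mem_bot] at h
    exact LinearMap.mem_ker.mpr h
  have hW2K : W 2 ≤ LinearMap.ker (N ^ 2) := by
    intro x hx
    have h1 := hNW 2 x hx
    rw [show (2 : ℤ) - 2 = 0 by norm_num] at h1
    have h2 := hW0K h1
    rw [LinearMap.mem_ker] at h2 ⊢
    rw [show (N ^ 2) x = N (N x) from by rw [pow_two, Module.End.mul_apply], h2]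
  have hW3K : W 3 ≤ LinearMap.ker (N ^ 2) := by
    intro x hx
    have h1 := hNW 3 x hx
    rw [show (3 : ℤ) - 2 = 1 by norm_num] at h1
    have h2 := hW1K h1
    rw [LinearMap.mem_ker] at h2 ⊢
    rw [show (N ^ 2) x = N (N x) from by rw [pow_two, Module.End.mul_apply], h2]
  have hW4K : W 4 ≤ LinearMap.ker (N ^ 3) := by
    intro x hx
    have h1 := hNW 4 x hx
    rw [show (4 : ℤ) - 2 = 2 by norm_num] at h1
    have h2 := hW2K h1
    rw [LinearMap.mem_ker] at h2 ⊢
    rw [show (N ^ 3) x = (N ^ 2) (N x) from by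
      rw [pow_succ, Module.End.mul_apply], h2]
  have hW5K : W 5 ≤ LinearMap.ker (N ^ 3) := by
    intro x hx
    have h1 := hNW 5 x hx
    rw [show (5 : ℤ) - 2 = 3 by norm_num] at h1
    have h2 := hW3K h1
    rw [LinearMap.mem_ker] at h2 ⊢
    rw [show (N ^ 3) x = (N ^ 2) (N x) from by
      rw [pow_succ, Module.End.mul_apply], h2]
  have hKW0 : LinearMap.ker N ≤ W 0 := by
    rw [hker1, hS1, Submodule.span_singleton_le_iff_mem]
    exact hx3W
  have hKW2 : LinearMap.ker (N ^ 2) ≤ W 2 := by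
    rw [hker2, hS2, Submodule.span_le]
    rintro x ⟨i, rfl⟩
    fin_cases i <;> simp only [Matrix.cons_val_zero, Matrix.cons_val_one, Matrix.head_cons]
    · exact hx2W
    · exact hmono (by norm_num : (0 : ℤ) ≤ 2) hx3W
  have hKW4 : LinearMap.ker (N ^ 3) ≤ W 4 := by
    rw [hker3, hS3, Submodule.span_le]
    rintro x ⟨i, rfl⟩
    fin_cases i <;> simp only [Matrix.cons_val_zero, Matrix.cons_val_one, Matrix.head_cons,
      Matrix.cons_val_two, Matrix.tail_cons]
    · exact hx1W
    · exact hmono (by norm_num : (2 : ℤ) ≤ 4) hx2W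
    · exact hmono (by norm_num : (0 : ℤ) ≤ 4) hx3W
  have hW0 : W 0 = LinearMap.ker N := le_antisymm hW0K hKW0
  have hW1 : W 1 = LinearMap.ker N :=
    le_antisymm hW1K (le_trans hKW0 (hmono (by norm_num : (0 : ℤ) ≤ 1)))
  have hW2 : W 2 = LinearMap.ker (N ^ 2) := le_antisymm hW2K hKW2
  have hW3 : W 3 = LinearMap.ker (N ^ 2) :=
    le_antisymm hW3K (le_trans hKW2 (hmono (by norm_num : (2 : ℤ) ≤ 3)))
  have hW4 : W 4 = LinearMap.ker (N ^ 3) := le_antisymm hW4K hKW4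
  have hW5 : W 5 = LinearMap.ker (N ^ 3) :=
    le_antisymm hW5K (le_trans hKW4 (hmono (by norm_num : (4 : ℤ) ≤ 5)))
  -- F-related facts
  have hcm : ∀ v : V, N (F v) = (p : ℚ_[p]) • F (N v) := by
    intro v
    have := LinearMap.ext_iff.mp hcomm v
    simpa using this
  have hpowF : ∀ (k : ℕ) (v : V), (N ^ k) (F v) = ((p : ℚ_[p]) ^ k) • F ((N ^ k) v) := by
    intro k
    induction k with
    | zero => intro v; simp
    | succ k ih =>
      intro v
      rw [← hstepv k (F v), ih v, map_smul, hcm, hstepv k v, smul_smul, ← pow_succ]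
  have hFker : F ((N ^ 3) e) ∈ LinearMap.ker N := by
    rw [LinearMap.mem_ker, hcm, hN3e0, map_zero, smul_zero]
  obtain ⟨c, hc⟩ : ∃ c : ℚ_[p], F ((N ^ 3) e) = c • (N ^ 3) e := by
    rw [hker1, hS1] at hFker
    obtain ⟨a, ha⟩ := Submodule.mem_span_singleton.mp hFker
    exact ⟨a, ha.symm⟩
  have hFK1 : ∀ v ∈ LinearMap.ker N, F v = c • v := by
    intro v hv
    rw [hker1, hS1] at hv
    obtain ⟨a, ha⟩ := Submodule.mem_span_singleton.mp hv
    rw [← ha, map_smul, hc, smul_comm]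
  have hBN : ∀ v u : V, B (N v) u = -B v (N u) := fun v u =>
    eq_neg_of_add_eq_zero_left (hNB v u)
  have hpow3 : ∀ u : V, (N ^ 3) u = N (N (N u)) := by
    intro u
    rw [show (3 : ℕ) = 2 + 1 from rfl, pow_succ, Module.End.mul_apply,
      pow_two, Module.End.mul_apply]
  have hpush : ∀ u : V, B ((N ^ 3) e) u = -B e ((N ^ 3) u) := by
    intro u
    rw [hpow3 e, hpow3 u, hBN, hBN, hBN]
    ring
  have hN3uK : ∀ u : V, (N ^ 3) u ∈ LinearMap.ker N := by
    intro u
    rw [LinearMap.mem_ker, hstepv 3 u]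
    rw [hN4, LinearMap.zero_apply]
  have hBe : B ((N ^ 3) e) e ≠ 0 := by
    intro hz
    refine he (hnondeg _ fun u => ?_)
    have hm := hN3uK u
    rw [hker1, hS1] at hm
    obtain ⟨a, ha⟩ := Submodule.mem_span_singleton.mp hm
    rw [hpush u, ← ha, map_smul, smul_eq_mul, halt e ((N ^ 3) e), hz]
    ring
  have hcc : c * c = 1 := by
    have h1 := hFB ((N ^ 3) e) e
    rw [hc, map_smul, LinearMap.smul_apply, smul_eq_mul] at h1
    have h2 : B ((N ^ 3) e) (F e) = (p : ℚ_[p]) ^ 3 * c * B ((N ^ 3) e) e := by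
      rw [hpush (F e), hpowF 3 e, hc, map_smul, map_smul, smul_eq_mul, smul_eq_mul,
        halt e ((N ^ 3) e)]
      ring
    rw [h2] at h1
    have h4 : (c * c - 1) * ((p : ℚ_[p]) ^ 3 * B ((N ^ 3) e) e) = 0 := by
      linear_combination h1
    rcases mul_eq_zero.mp h4 with h | h
    · exact sub_eq_zero.mp h
    · exact absurd h (mul_ne_zero (pow_ne_zero 3 hpQ) hBe)
  constructor
  · intro i hi
    interval_cases i
    · constructor
      · rw [show 2 * ((0 : ℕ) : ℤ) = 0 by norm_num, hW0, hker1, fr1]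
      · rw [show 2 * ((0 : ℕ) : ℤ) + 1 = 1 by norm_num, show 2 * ((0 : ℕ) : ℤ) = 0 by norm_num,
          hW0, hW1]
    · constructor
      · rw [show 2 * ((1 : ℕ) : ℤ) = 2 by norm_num, hW2, hker2, fr2]
      · rw [show 2 * ((1 : ℕ) : ℤ) + 1 = 3 by norm_num, show 2 * ((1 : ℕ) : ℤ) = 2 by norm_num,
          hW2, hW3]
    · constructor
      · rw [show 2 * ((2 : ℕ) : ℤ) = 4 by norm_num, hW4, hker3, fr3]
      · rw [show 2 * ((2 : ℕ) : ℤ) + 1 = 5 by norm_num, show 2 * ((2 : ℕ) : ℤ) = 4 by norm_num,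
          hW4, hW5]
    · constructor
      · rw [show 2 * ((3 : ℕ) : ℤ) = 6 by norm_num, hW6, finrank_top, hdim]
      · rw [show 2 * ((3 : ℕ) : ℤ) + 1 = 7 by norm_num, show 2 * ((3 : ℕ) : ℤ) = 6 by norm_num,
          hW6, htop 7 (by norm_num)]
  · refine ⟨c, mul_self_eq_one_iff.mp hcc, ?_⟩
    intro i hi v hv
    interval_cases i
    · rw [show 2 * ((0 : ℕ) : ℤ) = 0 by norm_num] at hv
      rw [show 2 * ((0 : ℕ) : ℤ) - 1 = -1 by norm_num, hbot (-1) (by norm_num),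
        Submodule.mem_bot, sub_eq_zero, pow_zero, mul_one]
      exact hFK1 v (hW0 ▸ hv)
    · rw [show 2 * ((1 : ℕ) : ℤ) = 2 by norm_num, hW2] at hv
      rw [show 2 * ((1 : ℕ) : ℤ) - 1 = 1 by norm_num, hW1, LinearMap.mem_ker]
      have hNv : N v ∈ LinearMap.ker N := by
        rw [LinearMap.mem_ker, show N (N v) = (N ^ 2) v from by
          rw [pow_two, Module.End.mul_apply]]
        exact LinearMap.mem_ker.mp hv
      rw [map_sub, hcm, hFK1 _ hNv, map_smul, smul_smul, pow_one, mul_comm, sub_self]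
    · rw [show 2 * ((2 : ℕ) : ℤ) = 4 by norm_num, hW4] at hv
      rw [show 2 * ((2 : ℕ) : ℤ) - 1 = 3 by norm_num, hW3, LinearMap.mem_ker]
      have hNv : (N ^ 2) v ∈ LinearMap.ker N := by
        rw [LinearMap.mem_ker, hstepv 2 v]
        exact LinearMap.mem_ker.mp hv
      rw [map_sub, hpowF 2 v, hFK1 _ hNv, map_smul, smul_smul, mul_comm, sub_self]
    · rw [show 2 * ((3 : ℕ) : ℤ) - 1 = 5 by norm_num, hW5, LinearMap.mem_ker]
      have hNv : (N ^ 3) v ∈ LinearMap.ker N := hN3uK v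
      rw [map_sub, hpowF 3 v, hFK1 _ hNv, map_smul, smul_smul, mul_comm, sub_self]
end
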